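/- arXiv:2007.04887 — 3 statements merged into one kernel-verified Lean document; each statement's English description precedes it below -/
import Mathlib

section
/- Let T > 0, let f, g, h : [0,T] → ℝ be continuous functions such that g is nonnegative on [0,T] and h is nondecreasing on [0,T], and let k ≥ 0 be a constant. If f(t) + ∫₀ᵗ g(s) ds ≤ h(t) + k ∫₀ᵗ f(s) ds for all t ∈ [0,T], then f(t) + ∫₀ᵗ g(s) ds ≤ h(t) e^{kt} for all t ∈ [0,T]. -/
/-!
With `F = f + ∫₀ˣ g`, nonnegativity of `g` gives `f ≤ F`, and monotonicity of `h` lets us freeze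
the forcing term at the endpoint: `F x ≤ h t + k ∫₀ˣ F` for `x ∈ [0, t]`. Grönwall's inequality
with the constant forcing term `h t` then yields `F t ≤ h t * exp (k t)`.
-/

open Set MeasureTheory intervalIntegral

theorem ContinuousOn.continuousOn_primitive {E : Type*} [NormedAddCommGroup E]
    [NormedSpace ℝ E] {F : ℝ → E} {a b : ℝ} (hF : ContinuousOn F (Icc a b)) :
    ContinuousOn (fun x => ∫ s in a..x, F s) (Icc a b) := by
  rcases le_or_gt a b with hab | hab
  · rw [← uIcc_of_le hab] at hF ⊢
    exact continuousOn_primitive_interval (hF.integrableOn_compact isCompact_uIcc)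
  · simp [Icc_eq_empty_of_lt hab]

theorem hasDerivWithinAt_integral_Ici_of_continuousOn {E : Type*} [NormedAddCommGroup E]
    [NormedSpace ℝ E] [CompleteSpace E] {F : ℝ → E} {a b x : ℝ}
    (hF : ContinuousOn F (Icc a b)) (hx : x ∈ Ico a b) :
    HasDerivWithinAt (fun u => ∫ s in a..u, F s) (F x) (Ici x) x := by
  have : Fact (x ∈ Icc a b) := ⟨Ico_subset_Icc_self hx⟩
  have hderiv : HasDerivWithinAt (fun u => ∫ s in a..u, F s) (F x) (Icc a b) x :=
    integral_hasDerivWithinAt_right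
      ((hF.mono (Icc_subset_Icc_right hx.2.le)).intervalIntegrable_of_Icc hx.1)
      (hF.stronglyMeasurableAtFilter_nhdsWithin measurableSet_Icc x) (hF x this.out)
  exact hderiv.mono_of_mem_nhdsWithin <|
    Filter.mem_of_superset (Icc_mem_nhdsGE hx.2) (Icc_subset_Icc_left hx.1)

theorem add_mul_gronwallBound_zero (C K x : ℝ) :
    C + K * gronwallBound 0 K C x = C * Real.exp (K * x) := by
  rcases eq_or_ne K 0 with rfl | hK
  · simp [gronwallBound_K0]
  · rw [gronwallBound_of_K_ne_0 hK]
    field_simp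
    ring

theorem integral_le_gronwallBound_of_le_add_mul_integral {F : ℝ → ℝ} {a b C K : ℝ}
    (hF : ContinuousOn F (Icc a b))
    (bound : ∀ x ∈ Ico a b, F x ≤ C + K * ∫ s in a..x, F s) :
    ∀ x ∈ Icc a b, ∫ s in a..x, F s ≤ gronwallBound 0 K C (x - a) := by
  refine le_gronwallBound_of_liminf_deriv_right_le (f' := F) hF.continuousOn_primitive
    (fun x hx r hr => ?_) (by simp) (fun x hx => (bound x hx).trans_eq (add_comm _ _))
  refine ((hasDerivWithinAt_integral_Ici_of_continuousOn hF hx).liminf_right_slope_le hr).mono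
    fun z hz => ?_
  rwa [slope_def_field, div_eq_inv_mul] at hz

theorem le_mul_exp_of_le_add_mul_integral {F : ℝ → ℝ} {a b C K : ℝ} (hK : 0 ≤ K)
    (hF : ContinuousOn F (Icc a b))
    (bound : ∀ x ∈ Icc a b, F x ≤ C + K * ∫ s in a..x, F s) :
    ∀ x ∈ Icc a b, F x ≤ C * Real.exp (K * (x - a)) := by
  intro x hx
  have hint := integral_le_gronwallBound_of_le_add_mul_integral hF
    (fun y hy => bound y (Ico_subset_Icc_self hy)) x hx
  calc F x ≤ C + K * ∫ s in a..x, F s := bound x hx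
    _ ≤ C + K * gronwallBound 0 K C (x - a) := by gcongr
    _ = C * Real.exp (K * (x - a)) := add_mul_gronwallBound_zero C K (x - a)

theorem modified_gronwall_general
    (T : ℝ)
    (f g h : ℝ → ℝ)
    (hf : ContinuousOn f (Set.Icc 0 T))
    (hg : ContinuousOn g (Set.Icc 0 T))
    (hg0 : ∀ t ∈ Set.Icc (0:ℝ) T, 0 ≤ g t)
    (hhmono : MonotoneOn h (Set.Icc 0 T))
    (k : ℝ) (hk : 0 ≤ k)
    (hyp : ∀ t ∈ Set.Icc (0:ℝ) T,
      f t + ∫ s in (0:ℝ)..t, g s ≤ h t + k * ∫ s in (0:ℝ)..t, f s) :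
    ∀ t ∈ Set.Icc (0:ℝ) T,
      f t + ∫ s in (0:ℝ)..t, g s ≤ h t * Real.exp (k * t) := by
  intro t ht
  have hsub : Icc 0 t ⊆ Icc 0 T := Icc_subset_Icc_right ht.2
  have hF : ContinuousOn (fun x => f x + ∫ s in (0:ℝ)..x, g s) (Icc 0 t) :=
    (hf.mono hsub).add (hg.mono hsub).continuousOn_primitive
  have hfF : ∀ x ∈ Icc 0 t, f x ≤ f x + ∫ s in (0:ℝ)..x, g s := fun x hx =>
    le_add_of_nonneg_right <| integral_nonneg hx.1 fun v hv => hg0 v (hsub ⟨hv.1, hv.2.trans hx.2⟩)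
  have bound : ∀ x ∈ Icc 0 t, f x + ∫ s in (0:ℝ)..x, g s ≤
      h t + k * ∫ s in (0:ℝ)..x, (f s + ∫ r in (0:ℝ)..s, g r) := by
    intro x hx
    have hx' : Icc 0 x ⊆ Icc 0 t := Icc_subset_Icc_right hx.2
    calc f x + ∫ s in (0:ℝ)..x, g s ≤ h x + k * ∫ s in (0:ℝ)..x, f s := hyp x (hsub hx)
      _ ≤ h t + k * ∫ s in (0:ℝ)..x, (f s + ∫ r in (0:ℝ)..s, g r) := by
        gcongr
        · exact hhmono (hsub hx) ht hx.2
        · exact integral_mono_on hx.1 ((hf.mono (hx'.trans hsub)).intervalIntegrable_of_Icc hx.1)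
            ((hF.mono hx').intervalIntegrable_of_Icc hx.1) fun s hs => hfF s (hx' hs)
  simpa using le_mul_exp_of_le_add_mul_integral hk hF bound t ⟨ht.1, le_rfl⟩

/-- Modified Grönwall's lemma: if `f t + ∫₀ᵗ g ≤ h t + k ∫₀ᵗ f` on `[0, T]`,
with `g` nonnegative, `h` nondecreasing, `k ≥ 0` and `f, g, h` continuous,
then `f t + ∫₀ᵗ g ≤ h t * exp (k t)` on `[0, T]`. -/
theorem modified_gronwall
    (T : ℝ) (hT : 0 < T)
    (f g h : ℝ → ℝ)
    (hf : ContinuousOn f (Set.Icc 0 T))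
    (hg : ContinuousOn g (Set.Icc 0 T))
    (hh : ContinuousOn h (Set.Icc 0 T))
    (hg0 : ∀ t ∈ Set.Icc (0:ℝ) T, 0 ≤ g t)
    (hhmono : MonotoneOn h (Set.Icc 0 T))
    (k : ℝ) (hk : 0 ≤ k)
    (hyp : ∀ t ∈ Set.Icc (0:ℝ) T,
      f t + ∫ s in (0:ℝ)..t, g s ≤ h t + k * ∫ s in (0:ℝ)..t, f s) :
    ∀ t ∈ Set.Icc (0:ℝ) T,
      f t + ∫ s in (0:ℝ)..t, g s ≤ h t * Real.exp (k * t) :=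
  modified_gronwall_general T f g h hf hg hg0 hhmono k hk hyp
end

section
/- The map u ↦ u uᵀ/|u| from ℝ^n \ {0} to the n×n real matrices is Lipschitz with constant 3: for all nonzero u, v ∈ ℝ^n, the operator norm satisfies ‖u uᵀ/|u| − v vᵀ/|v|‖ ≤ 3 |u − v|. -/
open Matrix

/-- The operator norm of a matrix acting on the Euclidean space `ℝⁿ`. -/
noncomputable def l2OpNorm {n : ℕ} (M : Matrix (Fin n) (Fin n) ℝ) : ℝ :=
  ‖LinearMap.toContinuousLinearMap (Matrix.toEuclideanLin M)‖

/-!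
With `û = u / |u|` (and `û = 0` for `u = 0`), the matrix `u uᵀ / |u|` is the rank-one operator
`u ûᵀ : x ↦ ⟪û, x⟫ u`, and `u ûᵀ - v v̂ᵀ = (u - v) ûᵀ + v (û - v̂)ᵀ`. The first term has norm at
most `|u - v|`, the second at most `2 |u - v|` because `|v| (û - v̂) = (u - v) + (|v| - |u|) û`.
-/

open NormedSpace InnerProductSpace

section Normalize

variable {V : Type*} [NormedAddCommGroup V] [NormedSpace ℝ V]

theorem norm_normalize_le_one (x : V) : ‖normalize x‖ ≤ 1 := by
  by_cases hx : x = 0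
  · simp [hx]
  · exact (norm_normalize hx).le

theorem norm_mul_norm_normalize_sub_normalize_le (u v : V) :
    ‖v‖ * ‖normalize u - normalize v‖ ≤ 2 * ‖u - v‖ := by
  have hsplit :
      ‖v‖ • (normalize u - normalize v) = (u - v) + (‖v‖ - ‖u‖) • normalize u := by
    rw [smul_sub, norm_smul_normalize, sub_smul, norm_smul_normalize]
    abel
  calc ‖v‖ * ‖normalize u - normalize v‖
      = ‖(u - v) + (‖v‖ - ‖u‖) • normalize u‖ := by
        rw [← hsplit, norm_smul, norm_norm]
    _ ≤ ‖u - v‖ + |‖v‖ - ‖u‖| * ‖normalize u‖ := by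
        grw [norm_add_le, norm_smul, Real.norm_eq_abs]
    _ ≤ ‖u - v‖ + ‖u - v‖ * 1 := by
        grw [abs_norm_sub_norm_le, norm_sub_rev v u, norm_normalize_le_one]
    _ = 2 * ‖u - v‖ := by ring

end Normalize

theorem norm_rankOne_normalize_sub_rankOne_normalize_le
    {E : Type*} [NormedAddCommGroup E] [InnerProductSpace ℝ E] (u v : E) :
    ‖rankOne ℝ u (normalize u) - rankOne ℝ v (normalize v)‖ ≤ 3 * ‖u - v‖ := by
  have hsplit : rankOne ℝ u (normalize u) - rankOne ℝ v (normalize v)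
      = rankOne ℝ (u - v) (normalize u) + rankOne ℝ v (normalize u - normalize v) := by
    simp only [map_sub, _root_.sub_apply]
    abel
  calc ‖rankOne ℝ u (normalize u) - rankOne ℝ v (normalize v)‖
      ≤ ‖u - v‖ * ‖normalize u‖ + ‖v‖ * ‖normalize u - normalize v‖ := by
        grw [hsplit, norm_add_le, norm_rankOne, norm_rankOne]
    _ ≤ ‖u - v‖ * 1 + 2 * ‖u - v‖ := by
        grw [norm_normalize_le_one, norm_mul_norm_normalize_sub_normalize_le]
    _ = 3 * ‖u - v‖ := by ring

theorem toEuclideanLin_of_mul_div_norm {n : ℕ} (u : EuclideanSpace ℝ (Fin n)) :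
    LinearMap.toContinuousLinearMap (toEuclideanLin (of fun i j => u i * u j / ‖u‖))
      = rankOne ℝ u (normalize u) := by
  have hmat :
      (of fun i j => u i * u j / ‖u‖) = toEuclideanLin.symm (rankOne ℝ u (normalize u)) := by
    ext i j
    simp only [of_apply, NormedSpace.normalize, map_smul, ContinuousLinearMap.toLinearMap_smul,
      symm_toEuclideanLin_rankOne, star_trivial, Matrix.smul_apply, vecMulVec_apply, smul_eq_mul]
    ring
  rw [hmat, LinearEquiv.apply_symm_apply]
  rfl

theorem rank_one_over_norm_lipschitz_general
    (n : ℕ) (u v : EuclideanSpace ℝ (Fin n)) :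
    l2OpNorm ((Matrix.of fun i j => u i * u j / ‖u‖)
        - (Matrix.of fun i j => v i * v j / ‖v‖))
      ≤ 3 * ‖u - v‖ := by
  rw [l2OpNorm, map_sub, map_sub, toEuclideanLin_of_mul_div_norm,
    toEuclideanLin_of_mul_div_norm]
  exact norm_rankOne_normalize_sub_rankOne_normalize_le u v

/-- The map `u ↦ u uᵀ / |u|` is Lipschitz with constant `3` on `ℝⁿ \ {0}`:
for all nonzero `u, v`, `‖u uᵀ/|u| − v vᵀ/|v|‖ ≤ 3 |u − v|` in the operator
norm of matrices acting on the Euclidean space `ℝⁿ`. -/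
theorem rank_one_over_norm_lipschitz
    (n : ℕ) (u v : EuclideanSpace ℝ (Fin n)) (hu : u ≠ 0) (hv : v ≠ 0) :
    l2OpNorm ((Matrix.of fun i j => u i * u j / ‖u‖)
        - (Matrix.of fun i j => v i * v j / ‖v‖))
      ≤ 3 * ‖u - v‖ :=
  rank_one_over_norm_lipschitz_general n u v
end

section
/- Assume in addition that d_l ≥ d_t. Then the dispersion tensor is Lipschitz on ℝ^n \ {0}: for all nonzero u, v ∈ ℝ^n, the operator norm satisfies ‖D(u) − D(v)‖ ≤ 3 d_l |u − v|; in particular the Lipschitz condition |D(u) − D(v)| ≤ C|u − v| assumed in the error analysis holds with C = 3 d_l. -/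
open Matrix

noncomputable def projMat {n : ℕ} (u : EuclideanSpace ℝ (Fin n)) :
    Matrix (Fin n) (Fin n) ℝ :=
  Matrix.of fun i j => u i * u j / ‖u‖ ^ 2

noncomputable def dispersion {n : ℕ} (φ dm dl dt : ℝ)
    (u : EuclideanSpace ℝ (Fin n)) : Matrix (Fin n) (Fin n) ℝ :=
  (φ * dm) • (1 : Matrix (Fin n) (Fin n) ℝ)
    + (dl * ‖u‖) • projMat u
    + (dt * ‖u‖) • ((1 : Matrix (Fin n) (Fin n) ℝ) - projMat u)

/-!
Writing `S(u) = |u| T(u) = |u|⁻¹ u uᵀ`, the difference of dispersion tensors is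
`D(u) - D(v) = d_t (|u| - |v|) I + (d_l - d_t) (S(u) - S(v))`, and `S` is `3`-Lipschitz: when
`|v| ≤ |u|`, `S(u) - S(v) = |u|⁻¹ (u - v) uᵀ + |u|⁻¹ v (u - v)ᵀ + (|u|⁻¹ - |v|⁻¹) v vᵀ`
and each of the three rank-one terms has operator norm at most `|u - v|`.
-/

open InnerProductSpace ContinuousLinearMap

lemma abs_inv_sub_inv_mul_sq_le {K : Type*} [Field K] [LinearOrder K] [IsStrictOrderedRing K]
    {a b : K} (hb : 0 ≤ b) (hba : b ≤ a) :
    |a⁻¹ - b⁻¹| * b ^ 2 ≤ a - b := by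
  rcases hb.eq_or_lt with rfl | hb
  · simpa using hba
  have ha : 0 < a := hb.trans_le hba
  rw [abs_of_nonpos (sub_nonpos.mpr (inv_anti₀ hb hba)), neg_sub]
  calc (b⁻¹ - a⁻¹) * b ^ 2 = (a - b) * (b / a) := by field_simp
    _ ≤ (a - b) * 1 := by gcongr; exact div_le_one_of_le₀ hba ha.le
    _ = a - b := mul_one _

section RankOne

variable {E : Type*} [SeminormedAddCommGroup E] [InnerProductSpace ℝ E]

lemma norm_inv_norm_smul_rankOne_self_sub_le_of_norm_le {u v : E} (hvu : ‖v‖ ≤ ‖u‖) :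
    ‖‖u‖⁻¹ • rankOne ℝ u u - ‖v‖⁻¹ • rankOne ℝ v v‖ ≤ 3 * ‖u - v‖ := by
  have hsplit : ‖u‖⁻¹ • rankOne ℝ u u - ‖v‖⁻¹ • rankOne ℝ v v
      = ‖u‖⁻¹ • rankOne ℝ (u - v) u + ‖u‖⁻¹ • rankOne ℝ v (u - v)
        + (‖u‖⁻¹ - ‖v‖⁻¹) • rankOne ℝ v v := by
    simp only [map_sub, _root_.sub_apply]
    module
  have hu : ‖u‖⁻¹ * ‖u‖ ≤ 1 := inv_mul_le_one_of_le₀ le_rfl (norm_nonneg u)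
  have h₁ : ‖‖u‖⁻¹ • rankOne ℝ (u - v) u‖ ≤ ‖u - v‖ := by
    rw [norm_smul, norm_rankOne, norm_inv, norm_norm]
    calc ‖u‖⁻¹ * (‖u - v‖ * ‖u‖) = ‖u - v‖ * (‖u‖⁻¹ * ‖u‖) := by ring
      _ ≤ ‖u - v‖ := mul_le_of_le_one_right (norm_nonneg _) hu
  have h₂ : ‖‖u‖⁻¹ • rankOne ℝ v (u - v)‖ ≤ ‖u - v‖ := by
    rw [norm_smul, norm_rankOne, norm_inv, norm_norm]
    calc ‖u‖⁻¹ * (‖v‖ * ‖u - v‖) ≤ ‖u‖⁻¹ * (‖u‖ * ‖u - v‖) := by gcongr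
      _ = ‖u - v‖ * (‖u‖⁻¹ * ‖u‖) := by ring
      _ ≤ ‖u - v‖ := mul_le_of_le_one_right (norm_nonneg _) hu
  have h₃ : ‖(‖u‖⁻¹ - ‖v‖⁻¹) • rankOne ℝ v v‖ ≤ ‖u - v‖ := by
    rw [norm_smul, norm_rankOne, Real.norm_eq_abs, ← sq]
    exact (abs_inv_sub_inv_mul_sq_le (norm_nonneg v) hvu).trans (norm_sub_norm_le u v)
  rw [hsplit]
  exact norm_add₃_le.trans (by linarith)

lemma lipschitzWith_inv_norm_smul_rankOne_self :
    LipschitzWith 3 fun u : E => ‖u‖⁻¹ • rankOne ℝ u u := by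
  refine LipschitzWith.of_dist_le_mul fun u v => ?_
  rw [dist_eq_norm, dist_eq_norm, NNReal.coe_ofNat]
  rcases le_total ‖v‖ ‖u‖ with hvu | huv
  · exact norm_inv_norm_smul_rankOne_self_sub_le_of_norm_le hvu
  · rw [norm_sub_rev, norm_sub_rev u]
    exact norm_inv_norm_smul_rankOne_self_sub_le_of_norm_le huv

end RankOne

lemma l2OpNorm_eq_norm_toEuclideanCLM {n : ℕ} (M : Matrix (Fin n) (Fin n) ℝ) :
    l2OpNorm M = ‖toEuclideanCLM (𝕜 := ℝ) M‖ := rfl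

lemma toEuclideanCLM_vecMulVec {ι : Type*} [Fintype ι] [DecidableEq ι]
    (u w : EuclideanSpace ℝ ι) :
    toEuclideanCLM (𝕜 := ℝ) (vecMulVec u w) = rankOne ℝ u w := by
  ext x i
  simp [vecMulVec_mulVec, EuclideanSpace.inner_eq_star_dotProduct, dotProduct_comm, mul_comm]

lemma projMat_eq_smul_vecMulVec {n : ℕ} (u : EuclideanSpace ℝ (Fin n)) :
    projMat u = (‖u‖ ^ 2)⁻¹ • vecMulVec u u := by
  ext i j
  simp [projMat, vecMulVec_apply, div_eq_inv_mul]

lemma toEuclideanCLM_dispersion {n : ℕ} (φ dm dl dt : ℝ) (u : EuclideanSpace ℝ (Fin n)) :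
    toEuclideanCLM (𝕜 := ℝ) (dispersion φ dm dl dt u)
      = (φ * dm + dt * ‖u‖) • 1 + (dl - dt) • (‖u‖⁻¹ • rankOne ℝ u u) := by
  have hcoef : ‖u‖ * (‖u‖ ^ 2)⁻¹ = ‖u‖⁻¹ := by rw [← div_eq_mul_inv, sq, div_self_mul_self']
  simp only [dispersion, projMat_eq_smul_vecMulVec, map_add, map_sub, map_smul, map_one,
    toEuclideanCLM_vecMulVec, smul_smul, ← hcoef]
  module

theorem dispersion_lipschitz_general
    (n : ℕ) (φ dm dl dt : ℝ)
    (hdt : 0 ≤ dt)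
    (hlt : dt ≤ dl)
    (u v : EuclideanSpace ℝ (Fin n)) :
    l2OpNorm (dispersion φ dm dl dt u - dispersion φ dm dl dt v)
      ≤ 3 * dl * ‖u - v‖ := by
  set S : EuclideanSpace ℝ (Fin n) → _ := fun w => ‖w‖⁻¹ • rankOne ℝ w w
  have hsplit : toEuclideanCLM (𝕜 := ℝ) (dispersion φ dm dl dt u - dispersion φ dm dl dt v)
      = (dt * (‖u‖ - ‖v‖)) • 1 + (dl - dt) • (S u - S v) := by
    rw [map_sub, toEuclideanCLM_dispersion, toEuclideanCLM_dispersion]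
    module
  have hS : ‖S u - S v‖ ≤ 3 * ‖u - v‖ := by
    simpa [dist_eq_norm] using lipschitzWith_inv_norm_smul_rankOne_self.dist_le_mul u v
  have hI : ‖(dt * (‖u‖ - ‖v‖)) • (1 : EuclideanSpace ℝ (Fin n) →L[ℝ] EuclideanSpace ℝ (Fin n))‖
      ≤ dt * ‖u - v‖ := by
    rw [norm_smul, Real.norm_eq_abs, abs_mul, abs_of_nonneg hdt, mul_assoc]
    gcongr
    exact (mul_le_of_le_one_right (abs_nonneg _) norm_id_le).trans (abs_norm_sub_norm_le u v)
  rw [l2OpNorm_eq_norm_toEuclideanCLM, hsplit]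
  calc _ ≤ dt * ‖u - v‖ + (dl - dt) * (3 * ‖u - v‖) := by
        have hdiff : 0 ≤ dl - dt := sub_nonneg.mpr hlt
        grw [norm_add_le, hI, norm_smul, Real.norm_eq_abs, abs_of_nonneg hdiff, hS]
    _ ≤ 3 * dl * ‖u - v‖ := by linarith [mul_nonneg hdt (norm_nonneg (u - v))]

/-- If `d_l ≥ d_t` then the dispersion tensor is Lipschitz on `ℝⁿ \ {0}`:
`‖D(u) − D(v)‖ ≤ 3 d_l |u − v|` in the operator norm, so the Lipschitz
condition `|D(u) − D(v)| ≤ C |u − v|` holds with `C = 3 d_l`. -/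
theorem dispersion_lipschitz
    (n : ℕ) (hn : 1 ≤ n) (φ dm dl dt : ℝ)
    (hφ : 0 < φ) (hdm : 0 < dm) (hdl : 0 ≤ dl) (hdt : 0 ≤ dt)
    (hlt : dt ≤ dl)
    (u v : EuclideanSpace ℝ (Fin n)) (hu : u ≠ 0) (hv : v ≠ 0) :
    l2OpNorm (dispersion φ dm dl dt u - dispersion φ dm dl dt v)
      ≤ 3 * dl * ‖u - v‖ :=
  dispersion_lipschitz_general n φ dm dl dt hdt hlt u v
end
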